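/- With h_{i,j} as above (built from a smooth quadrature-mirror filter p vanishing on [1/7,3/14] ∪ [3/7,1/2]), for all x: |h_{2,1}(x/2)|² + |h_{2,1}((x+1)/2)|² = 2·χ_{S_2}(x) and h_{1,1}(x/2)·h_{2,1}(x/2) + h_{1,1}((x+1)/2)·h_{2,1}((x+1)/2) = 0, where S_2 is the 1-periodization of [-1/7, 1/7). -/
import Mathlib


/-- The 1-periodization of a set `S ⊆ ℝ`. -/
def per (S : Set ℝ) : Set ℝ := {x | ∃ k : ℤ, x + k ∈ S}

/-- `h_{1,1}(x) = p(x)` for `x ∈ [-2/7, 2/7)` mod 1 and `0` otherwise. -/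
noncomputable def h11 (p : ℝ → ℝ) : ℝ → ℝ :=
  Set.indicator (per (Set.Ico (-2/7) (2/7))) p

/-- `h_{2,1}(x) = √2` for `x ∈ ±[3/7, 1/2)` mod 1 and `0` otherwise. -/
noncomputable def h21 : ℝ → ℝ :=
  Set.indicator (per (Set.Ico (3/7) (1/2) ∪ Set.Ico (-1/2) (-3/7))) (fun _ => Real.sqrt 2)

lemma no_mid (c : ℤ) (h1 : (0:ℝ) < c) (h2 : (c:ℝ) < 1) : False := by
  have h3 : 0 < c := by exact_mod_cast h1
  have h4 : (1:ℝ) ≤ c := by exact_mod_cast h3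
  linarith

lemma h21_of_mem {y : ℝ} (h : y ∈ per (Set.Ico (3/7 : ℝ) (1/2) ∪ Set.Ico (-1/2) (-3/7))) :
    h21 y = Real.sqrt 2 := Set.indicator_of_mem h _

lemma h21_of_notMem {y : ℝ} (h : y ∉ per (Set.Ico (3/7 : ℝ) (1/2) ∪ Set.Ico (-1/2) (-3/7))) :
    h21 y = 0 := Set.indicator_of_notMem h _

lemma prod_zero (p : ℝ → ℝ) (y : ℝ) : h11 p y * h21 y = 0 := by
  by_cases h1 : y ∈ per (Set.Ico (-2/7 : ℝ) (2/7))
  · by_cases h2 : y ∈ per (Set.Ico (3/7 : ℝ) (1/2) ∪ Set.Ico (-1/2) (-3/7))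
    · exfalso
      obtain ⟨k, hk⟩ := h1
      obtain ⟨m, hm⟩ := h2
      simp only [Set.mem_Ico, Set.mem_union] at hk hm
      rcases hm with hm | hm
      · exact no_mid (m - k) (by push_cast; linarith [hk.1, hk.2, hm.1, hm.2])
          (by push_cast; linarith [hk.1, hk.2, hm.1, hm.2])
      · exact no_mid (k - m) (by push_cast; linarith [hk.1, hk.2, hm.1, hm.2])
          (by push_cast; linarith [hk.1, hk.2, hm.1, hm.2])
    · rw [h21_of_notMem h2, mul_zero]
  · rw [show h11 p y = 0 from Set.indicator_of_notMem h1 _, zero_mul]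

/-- With the filters built from the smooth quadrature-mirror
filter `p` vanishing on `[1/7,3/14] ∪ [3/7,1/2]`, for all `x`:
`|h₂₁(x/2)|² + |h₂₁((x+1)/2)|² = 2·χ_{S₂}(x)` and
`h₁₁(x/2)·h₂₁(x/2) + h₁₁((x+1)/2)·h₂₁((x+1)/2) = 0`,
where `S₂` is the 1-periodization of `[-1/7, 1/7)`. -/
theorem stmt9 (p : ℝ → ℝ)
    (hsm : ContDiff ℝ (⊤ : ℕ∞) p)
    (hper : ∀ x, p (x + 1) = p x)
    (heven : ∀ x, p (-x) = p x)
    (hqmf : ∀ x, p x ^ 2 + p (x + 1/2) ^ 2 = 2)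
    (hvan : ∀ x ∈ Set.Icc (1/7 : ℝ) (3/14) ∪ Set.Icc (3/7 : ℝ) (1/2), p x = 0) :
    (∀ x : ℝ, (h21 (x/2)) ^ 2 + (h21 ((x+1)/2)) ^ 2
        = 2 * Set.indicator (per (Set.Ico (-1/7) (1/7))) 1 x) ∧
    (∀ x : ℝ, h11 p (x/2) * h21 (x/2) + h11 p ((x+1)/2) * h21 ((x+1)/2) = 0) := by
  constructor
  · intro x
    by_cases hx : x ∈ per (Set.Ico (-1/7 : ℝ) (1/7))
    · rw [Set.indicator_of_mem hx, Pi.one_apply, mul_one]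
      obtain ⟨k, hk⟩ := hx
      simp only [Set.mem_Ico] at hk
      rcases Int.even_or_odd k with ⟨m, hm⟩ | ⟨m, hm⟩
      · -- k = m + m : the (x+1)/2 term is nonzero
        have ht1 : (-1/7 : ℝ) ≤ x + 2*m := by push_cast [hm] at hk; linarith [hk.1]
        have ht2 : x + 2*(m:ℝ) < 1/7 := by push_cast [hm] at hk; linarith [hk.2]
        have z1 : h21 (x/2) = 0 := by
          apply h21_of_notMem
          rintro ⟨j, hj⟩
          simp only [Set.mem_Ico, Set.mem_union] at hj
          rcases hj with hj | hj
          · exact no_mid (j - m) (by push_cast; linarith [hj.1]) (by push_cast; linarith [hj.2])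
          · exact no_mid (m - j) (by push_cast; linarith [hj.2]) (by push_cast; linarith [hj.1])
        have z2 : h21 ((x+1)/2) = Real.sqrt 2 := by
          apply h21_of_mem
          by_cases hc : x + 2*(m:ℝ) < 0
          · exact ⟨m, Or.inl ⟨by push_cast; linarith, by push_cast; linarith⟩⟩
          · exact ⟨m - 1, Or.inr ⟨by push_cast; linarith, by push_cast; linarith⟩⟩
        rw [z1, z2, Real.sq_sqrt (by norm_num : (0:ℝ) ≤ 2)]
        ring
      · -- k = 2m + 1 : the x/2 term is nonzero
        have ht1 : (-1/7 : ℝ) ≤ x + 2*m + 1 := by push_cast [hm] at hk; linarith [hk.1]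
        have ht2 : x + 2*(m:ℝ) + 1 < 1/7 := by push_cast [hm] at hk; linarith [hk.2]
        have z2 : h21 ((x+1)/2) = 0 := by
          apply h21_of_notMem
          rintro ⟨j, hj⟩
          simp only [Set.mem_Ico, Set.mem_union] at hj
          rcases hj with hj | hj
          · exact no_mid (j - m) (by push_cast; linarith [hj.1]) (by push_cast; linarith [hj.2])
          · exact no_mid (m - j) (by push_cast; linarith [hj.2]) (by push_cast; linarith [hj.1])
        have z1 : h21 (x/2) = Real.sqrt 2 := by
          apply h21_of_mem
          by_cases hc : (-1 : ℝ) ≤ x + 2*(m:ℝ)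
          · exact ⟨m, Or.inr ⟨by push_cast; linarith, by push_cast; linarith⟩⟩
          · exact ⟨m + 1, Or.inl ⟨by push_cast; linarith, by push_cast; linarith⟩⟩
        rw [z1, z2, Real.sq_sqrt (by norm_num : (0:ℝ) ≤ 2)]
        ring
    · have z1 : h21 (x/2) = 0 := by
        apply h21_of_notMem
        rintro ⟨j, hj⟩
        simp only [Set.mem_Ico, Set.mem_union] at hj
        rcases hj with hj | hj
        · exact hx ⟨2*j - 1, by constructor <;> (push_cast; linarith [hj.1, hj.2])⟩
        · exact hx ⟨2*j + 1, by constructor <;> (push_cast; linarith [hj.1, hj.2])⟩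
      have z2 : h21 ((x+1)/2) = 0 := by
        apply h21_of_notMem
        rintro ⟨j, hj⟩
        simp only [Set.mem_Ico, Set.mem_union] at hj
        rcases hj with hj | hj
        · exact hx ⟨2*j, by constructor <;> (push_cast; linarith [hj.1, hj.2])⟩
        · exact hx ⟨2*j + 2, by constructor <;> (push_cast; linarith [hj.1, hj.2])⟩
      rw [z1, z2, Set.indicator_of_notMem hx]
      ring
  · intro x
    rw [prod_zero, prod_zero, add_zero]
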